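/- Let φ(x) denote the standard normal density and φ(x,y;ρ) the centered bivariate normal density with unit variances and correlation ρ. Then for every ρ₀ ∈ [0,1), every r > 0, every ρ with |ρ| ≤ ρ₀, and all x, y with |x| ≥ r and |y| ≥ r, one has φ(x,y;ρ)/(φ(x)φ(y))^{1/2} ≤ (2π(1−ρ₀²))^{−1/2} exp(−(1−ρ₀)r²/(2(1+ρ₀))). -/

import Mathlib

open Real

/-- The standard normal density. -/
noncomputable def stdPDF (x : ℝ) : ℝ :=
  (Real.sqrt (2 * π))⁻¹ * Real.exp (-x ^ 2 / 2)

/-- The centered bivariate normal density with unit variances and correlation `ρ`. -/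
noncomputable def bvnPDF (ρ x y : ℝ) : ℝ :=
  (2 * π * Real.sqrt (1 - ρ ^ 2))⁻¹ *
    Real.exp (-(x ^ 2 - 2 * ρ * x * y + y ^ 2) / (2 * (1 - ρ ^ 2)))

lemma key_exp (ρ₀ r ρ x y : ℝ) (h0 : 0 ≤ ρ₀) (h1 : ρ₀ < 1) (hr : 0 < r)
    (hρl : -ρ₀ ≤ ρ) (hρu : ρ ≤ ρ₀) (hx2 : r ^ 2 ≤ x ^ 2) (hy2 : r ^ 2 ≤ y ^ 2) :
    -(x ^ 2 - 2 * ρ * x * y + y ^ 2) / (2 * (1 - ρ ^ 2)) + (x ^ 2 + y ^ 2) / 4 ≤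
      -(1 - ρ₀) * r ^ 2 / (2 * (1 + ρ₀)) := by
  have hd : 0 < 1 - ρ ^ 2 := by nlinarith
  have ht : 0 < 1 + ρ₀ := by linarith
  have heq : -(x ^ 2 - 2 * ρ * x * y + y ^ 2) / (2 * (1 - ρ ^ 2)) + (x ^ 2 + y ^ 2) / 4
      = ((1 - ρ ^ 2) * (x ^ 2 + y ^ 2) - 2 * (x ^ 2 - 2 * ρ * x * y + y ^ 2)) / (4 * (1 - ρ ^ 2)) := by
    field_simp
    ring
  rw [heq, div_le_div_iff₀ (by positivity) (by positivity)]
  rcases le_or_gt 0 ρ with hρ0 | hρ0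
  · nlinarith [mul_nonneg hρ0 (sq_nonneg (x - y)), mul_nonneg (mul_nonneg hρ0 (sq_nonneg (x - y))) ht.le,
      mul_nonneg (sub_nonneg.2 hρu) (sq_nonneg r), sq_nonneg (x - y), sq_nonneg (1 - ρ),
      mul_le_mul_of_nonneg_left (add_le_add hx2 hy2) (mul_nonneg (sq_nonneg (1 - ρ)) ht.le),
      mul_nonneg (mul_nonneg (sub_nonneg.2 hρu) (sq_nonneg r)) (sub_nonneg.2 (hρu.trans h1.le))]
  · nlinarith [mul_nonneg (neg_nonneg.2 hρ0.le) (sq_nonneg (x + y)),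
      mul_nonneg (mul_nonneg (neg_nonneg.2 hρ0.le) (sq_nonneg (x + y))) ht.le,
      mul_le_mul_of_nonneg_left (add_le_add hx2 hy2) (mul_nonneg (sq_nonneg (1 + ρ)) ht.le),
      mul_nonneg (mul_nonneg (sub_nonneg.2 (neg_le.1 hρl)) (sq_nonneg r)) (sub_nonneg.2 (hρu.trans h1.le)),
      mul_nonneg (sub_nonneg.2 (neg_le.1 hρl)) (sq_nonneg r)]

/-- Uniform bound on the normalized bivariate normal density:
`φ(x,y;ρ)/(φ(x)φ(y))^{1/2} ≤ (2π(1−ρ₀²))^{−1/2} exp(−(1−ρ₀)r²/(2(1+ρ₀)))`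
for `|ρ| ≤ ρ₀ < 1` and `|x|,|y| ≥ r`. -/
theorem stmt3 (ρ₀ r ρ x y : ℝ) (h0 : 0 ≤ ρ₀) (h1 : ρ₀ < 1) (hr : 0 < r)
    (hρ : |ρ| ≤ ρ₀) (hx : r ≤ |x|) (hy : r ≤ |y|) :
    bvnPDF ρ x y / Real.sqrt (stdPDF x * stdPDF y) ≤
      (Real.sqrt (2 * π * (1 - ρ₀ ^ 2)))⁻¹ *
        Real.exp (-(1 - ρ₀) * r ^ 2 / (2 * (1 + ρ₀))) := by
  have hπ : 0 < π := Real.pi_pos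
  have h2π : (0:ℝ) < 2 * π := by positivity
  obtain ⟨hρl, hρu⟩ := abs_le.mp hρ
  have hd : 0 < 1 - ρ ^ 2 := by nlinarith
  have hd0 : 0 < 1 - ρ₀ ^ 2 := by nlinarith
  have hx2 : r ^ 2 ≤ x ^ 2 := by nlinarith [sq_abs x, abs_nonneg x]
  have hy2 : r ^ 2 ≤ y ^ 2 := by nlinarith [sq_abs y, abs_nonneg y]
  have hs : (0:ℝ) < Real.sqrt (2 * π) := Real.sqrt_pos.2 h2π
  have hs2 : Real.sqrt (2 * π) * Real.sqrt (2 * π) = 2 * π := Real.mul_self_sqrt h2π.le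
  have hsd : (0:ℝ) < Real.sqrt (1 - ρ ^ 2) := Real.sqrt_pos.2 hd
  -- simplify the denominator
  have hsq : Real.sqrt (stdPDF x * stdPDF y)
      = (Real.sqrt (2 * π))⁻¹ * Real.exp (-(x ^ 2 + y ^ 2) / 4) := by
    have : stdPDF x * stdPDF y = (2 * π)⁻¹ * Real.exp (-(x ^ 2 + y ^ 2) / 2) := by
      unfold stdPDF
      rw [mul_mul_mul_comm, ← Real.exp_add, ← mul_inv, hs2]
      ring_nf
    rw [this, Real.sqrt_mul (by positivity), Real.sqrt_inv, ← Real.exp_half]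
    ring_nf
  have hLHS : bvnPDF ρ x y / Real.sqrt (stdPDF x * stdPDF y)
      = (Real.sqrt (2 * π) * Real.sqrt (1 - ρ ^ 2))⁻¹ *
        Real.exp (-(x ^ 2 - 2 * ρ * x * y + y ^ 2) / (2 * (1 - ρ ^ 2)) + (x ^ 2 + y ^ 2) / 4) := by
    rw [hsq]
    unfold bvnPDF
    rw [Real.exp_add, div_eq_iff (by positivity)]
    field_simp
    rw [← hs2]
    simp only [← Real.exp_add, Real.sqrt_mul (by norm_num : (0:ℝ) ≤ 2) π]
    ring_nf
    rw [mul_assoc, ← Real.exp_add, Real.sq_sqrt (by positivity)]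
    ring_nf
    simp
  rw [hLHS]
  have hpre : (Real.sqrt (2 * π) * Real.sqrt (1 - ρ ^ 2))⁻¹ ≤
      (Real.sqrt (2 * π * (1 - ρ₀ ^ 2)))⁻¹ := by
    rw [Real.sqrt_mul h2π.le]
    apply inv_anti₀ (by positivity)
    exact mul_le_mul_of_nonneg_left (Real.sqrt_le_sqrt (by nlinarith)) hs.le
  have hexp := key_exp ρ₀ r ρ x y h0 h1 hr hρl hρu hx2 hy2
  exact mul_le_mul hpre (Real.exp_le_exp.2 hexp) (Real.exp_pos _).le (by positivity)
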